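/- Let F be a field of characteristic ≠ 2 and let S be a centrally essential non-unital F-algebra in which every element a satisfies a² = 0. Then S is commutative. -/

import Mathlib

/-- A (not necessarily unital) ring is *centrally essential* if either it is commutative, or
for every non-central element `a` there exist nonzero central elements `x`, `y` with
`a * x = y`. -/
def IsCentrallyEssential (R : Type*) [NonUnitalNonAssocRing R] : Prop :=
  (∀ a b : R, a * b = b * a) ∨
    ∀ a : R, ¬ (∀ b : R, a * b = b * a) →
      ∃ x y : R, (∀ b : R, x * b = b * x) ∧ (∀ b : R, y * b = b * y) ∧
        x ≠ 0 ∧ y ≠ 0 ∧ a * x = y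

theorem mul_add_mul_eq_zero_of_forall_mul_self_eq_zero {R : Type*} [NonUnitalNonAssocSemiring R]
    (hsq : ∀ a : R, a * a = 0) (a b : R) : a * b + b * a = 0 := by
  have h := hsq (a + b)
  rwa [add_mul, mul_add, mul_add, hsq a, hsq b, zero_add, add_zero] at h

theorem eq_zero_of_add_self_eq_zero_of_ringChar_ne_two {F M : Type*} [DivisionRing F]
    [AddCommGroup M] [Module F M] (hF : ringChar F ≠ 2) {s : M} (hs : s + s = 0) : s = 0 := by
  rw [← two_smul F, smul_eq_zero] at hs
  exact hs.resolve_left (Ring.two_ne_zero hF)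

theorem mul_eq_zero_of_commute_of_anticomm {R : Type*} [NonUnitalNonAssocRing R]
    (hanti : ∀ a b : R, a * b + b * a = 0) (h2 : ∀ s : R, s + s = 0 → s = 0) {a x : R}
    (hax : a * x = x * a) : a * x = 0 :=
  h2 _ (by simpa only [← hax] using hanti a x)

theorem IsCentrallyEssential.commutative_of_mul_central_eq_zero {R : Type*}
    [NonUnitalNonAssocRing R] (hce : IsCentrallyEssential R)
    (h : ∀ a x : R, (∀ b, x * b = b * x) → a * x = 0) : ∀ a b : R, a * b = b * a := by
  refine hce.elim id fun hne => ?_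
  intro a b
  by_contra hab
  obtain ⟨x, y, hx, -, -, hy, rfl⟩ := hne a fun hc => hab (hc b)
  exact hy (h a x hx)

theorem commutative_of_centrallyEssential_of_sq_eq_zero_general
    (F : Type*) [Field F] (hF : ringChar F ≠ 2)
    (S : Type*) [NonUnitalRing S] [Module F S]
    (hce : IsCentrallyEssential S) (hsq : ∀ a : S, a * a = 0) :
    ∀ a b : S, a * b = b * a :=
  hce.commutative_of_mul_central_eq_zero fun a _ hx =>
    mul_eq_zero_of_commute_of_anticomm (mul_add_mul_eq_zero_of_forall_mul_self_eq_zero hsq)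
      (fun _ => eq_zero_of_add_self_eq_zero_of_ringChar_ne_two hF) (hx a).symm

/-- Over a field of characteristic `≠ 2`, a centrally essential non-unital `F`-algebra in
which every element has square zero is commutative. -/
theorem commutative_of_centrallyEssential_of_sq_eq_zero
    (F : Type*) [Field F] (hF : ringChar F ≠ 2)
    (S : Type*) [NonUnitalRing S] [Module F S]
    [SMulCommClass F S S] [IsScalarTower F S S]
    (hce : IsCentrallyEssential S) (hsq : ∀ a : S, a * a = 0) :
    ∀ a b : S, a * b = b * a :=
  commutative_of_centrallyEssential_of_sq_eq_zero_general F hF S hce hsq
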